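/- Let S ⊆ ℤ^d be a finitely generated subsemigroup with S - S = ℤ^d and S ≠ ℤ^d, a the sum of generators, and L_k := (S + k•a) \ (S + (k+1)•a) for k ≥ 0. Then the sets L_k (k ≥ 0) are pairwise disjoint and their union is S. -/

import Mathlib

/-!
Since `a ∈ S`, the translates `S + k • a` decrease in `k`, so their successive differences `L k`
are pairwise disjoint and cover `S` minus the intersection of all translates. That intersection
is empty: `a - eᵢ` is the sum of the other generators, so every `t ∈ S` satisfies `k • a - t ∈ S`
for some `k`. If `x` lay in every translate, any `z` could be written, using `z - x = s - t` with
`s, t ∈ S`, as `z = (x - k • a) + s + (k • a - t) ∈ S`, contradicting `S ≠ ℤ^d`.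
-/

open Set Function

theorem Antitone.pairwise_disjoint_on_diff_succ {α : Type*} {T : ℕ → Set α} (hT : Antitone T) :
    Pairwise (Disjoint on fun k => T k \ T (k + 1)) :=
  (pairwise_disjoint_on _).2 fun _ _ hkj =>
    disjoint_left.2 fun _ hk hj => hk.2 (hT hkj hj.1)

theorem Antitone.iUnion_diff_succ {α : Type*} {T : ℕ → Set α} (hT : Antitone T) :
    ⋃ k, (T k \ T (k + 1)) = T 0 \ ⋂ k, T k := by
  ext x
  simp only [mem_iUnion, mem_sdiff, mem_iInter, not_forall]
  constructor
  · rintro ⟨k, hk, hk'⟩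
    exact ⟨hT (Nat.zero_le k) hk, k + 1, hk'⟩
  · rintro ⟨h0, hout⟩
    by_contra! hstay
    obtain ⟨k, hk⟩ := hout
    exact hk <| Nat.rec h0 hstay k

section

variable {G : Type*} [AddCommGroup G]

theorem AddSubmonoid.mem_image_add_iff (S : AddSubmonoid G) {x c : G} :
    x ∈ (fun s => s + c) '' (S : Set G) ↔ x - c ∈ S := by
  simp [image_add_right, sub_eq_add_neg]

theorem AddSubmonoid.antitone_image_add_nsmul {S : AddSubmonoid G} {a : G} (ha : a ∈ S) :
    Antitone fun k : ℕ => (fun s => s + k • a) '' (S : Set G) := by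
  intro k j hkj x hx
  rw [mem_image_add_iff] at hx ⊢
  have : x - k • a = (x - j • a) + (j - k) • a := by rw [sub_nsmul a hkj]; abel
  exact this ▸ S.add_mem hx (S.nsmul_mem ha _)

theorem AddSubmonoid.exists_nsmul_sum_sub_mem_closure {ι : Type*} [Fintype ι] (e : ι → G) {t : G}
    (ht : t ∈ closure (range e)) : ∃ k : ℕ, k • ∑ i, e i - t ∈ closure (range e) := by
  induction ht using closure_induction with
  | mem x hx =>
    classical
    obtain ⟨i, rfl⟩ := hx
    refine ⟨1, ?_⟩
    rw [one_smul, ← Finset.add_sum_erase _ _ (Finset.mem_univ i), add_sub_cancel_left]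
    exact sum_mem _ fun j _ => subset_closure (mem_range_self j)
  | zero => exact ⟨0, by simp [zero_mem]⟩
  | add x y _ _ ihx ihy =>
    obtain ⟨k, hk⟩ := ihx
    obtain ⟨k', hk'⟩ := ihy
    refine ⟨k + k', ?_⟩
    have : (k + k') • ∑ i, e i - (x + y) = (k • ∑ i, e i - x) + (k' • ∑ i, e i - y) := by
      rw [add_nsmul]; abel
    exact this ▸ add_mem hk hk'

theorem AddSubmonoid.iInter_image_add_nsmul_eq_empty {S : AddSubmonoid G} {a : G}
    (hdom : ∀ t ∈ S, ∃ k : ℕ, k • a - t ∈ S) (hgrp : ∀ x : G, ∃ s ∈ S, ∃ t ∈ S, x = s - t)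
    (hne : (S : Set G) ≠ univ) :
    ⋂ k : ℕ, (fun s => s + k • a) '' (S : Set G) = ∅ := by
  refine eq_empty_of_forall_notMem fun x hx => hne <| eq_univ_of_forall fun z => ?_
  simp only [mem_iInter, mem_image_add_iff] at hx
  obtain ⟨s, hs, t, ht, hzx⟩ := hgrp (z - x)
  obtain ⟨k, hk⟩ := hdom t ht
  have : z = (x - k • a) + s + (k • a - t) := by
    rw [show z = x + (z - x) by abel, hzx]; abel
  exact this ▸ S.add_mem (S.add_mem (hx k) hs) hk

end

theorem stmt_4 (d r : ℕ) (S : AddSubmonoid (Fin d → ℤ)) (e : Fin r → (Fin d → ℤ))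
    (hgen : S = AddSubmonoid.closure (Set.range e))
    (hgrp : ∀ x : Fin d → ℤ, ∃ s ∈ S, ∃ t ∈ S, x = s - t)
    (hne : (S : Set (Fin d → ℤ)) ≠ Set.univ)
    (a : Fin d → ℤ) (ha : a = ∑ i, e i)
    (L : ℕ → Set (Fin d → ℤ))
    (hL : ∀ k : ℕ, L k = (fun s => s + k • a) '' (S : Set (Fin d → ℤ)) \
        (fun s => s + (k + 1) • a) '' (S : Set (Fin d → ℤ))) :
    Pairwise (Function.onFun Disjoint L) ∧ (⋃ k : ℕ, L k) = (S : Set (Fin d → ℤ)) := by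
  have haS : a ∈ S := by
    rw [hgen, ha]
    exact AddSubmonoid.sum_mem _ fun i _ => AddSubmonoid.subset_closure (mem_range_self i)
  have hdom : ∀ t ∈ S, ∃ k : ℕ, k • a - t ∈ S := by
    subst hgen ha
    exact fun t ht => AddSubmonoid.exists_nsmul_sum_sub_mem_closure e ht
  have hT := AddSubmonoid.antitone_image_add_nsmul haS
  obtain rfl : L = fun k => _ := funext hL
  refine ⟨hT.pairwise_disjoint_on_diff_succ, ?_⟩
  rw [hT.iUnion_diff_succ, AddSubmonoid.iInter_image_add_nsmul_eq_empty hdom hgrp hne]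
  simp
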